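/- Fix D > 0, 0 < p < 1, 0 < L < 1, μ ∈ ℝ and σ > 0. Consider the system in (ν, τ) ∈ ℝ × (0, ∞): p = Φ(x(D)) and D·p·(1 − L) = exp(μ + σ²/2)·Φ(x(D) − σ) + exp(ν + τ²/2)·Φ(x(D) − τ), where x(D) is the unique real solution of D = exp(μ + σ·x) + exp(ν + τ·x). A solution (ν, τ) ∈ ℝ × (0, ∞) exists if and only if both (i) p < Φ((log D − μ)/σ), and (ii) (p·exp(μ + σ·Φ⁻¹(p)) − exp(μ + σ²/2)·Φ(Φ⁻¹(p) − σ))/(p·D) < L < 1 − exp(μ + σ²/2)·Φ(Φ⁻¹(p) − σ)/(p·D). Moreover, if a solution exists it is unique. -/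

import Mathlib

/-!
The equation `p = Φ(x)` forces `x = Φ⁻¹(p)`, and the debt equation then fixes the level
`exp(ν + τx) = D - exp(μ + σx)`, which must be positive: this is condition (i). Since
`exp(ν + τ²/2) Φ(x - τ) = exp(ν + τx) M(τ)` with `M(τ) = E[exp(τ(Z - x)); Z ≤ x]` for a
standard normal `Z` (`M = lowerTailMGF x`), the loss equation prescribes the value of `M(τ)`.
The function `M` is continuous and strictly decreasing, with `M(0) = Φ(x) = p` and
`0 < M(τ) ≤ φ(0)/τ`, so a (necessarily unique) `τ > 0` exists exactly when the prescribed value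
lies in `(0, p)`: this is condition (ii).
-/

open Real

/-- The standard normal density `φ(u) = (2π)^{-1/2} exp(-u²/2)`. -/
noncomputable def stdNormalPDF (u : ℝ) : ℝ := (Real.sqrt (2 * Real.pi))⁻¹ * Real.exp (-u ^ 2 / 2)

/-- The standard normal cumulative distribution function `Φ`. -/
noncomputable def stdNormalCDF (x : ℝ) : ℝ := ∫ u in Set.Iic x, stdNormalPDF u

/-- The standard normal quantile function `Φ⁻¹`. -/
noncomputable def stdNormalQuantile (p : ℝ) : ℝ := Function.invFun stdNormalCDF p

/-- `(ν, τ)` together with the induced `x(D)` solves the comonotonic two-assets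
calibration system for issuer debt `D`, PD `p` and LGD `L`, given cover pool
parameters `μ` and `σ`. -/
def SolvesCalibration (D p L μ σ ν τ x : ℝ) : Prop :=
  0 < τ ∧
  D = Real.exp (μ + σ * x) + Real.exp (ν + τ * x) ∧
  p = stdNormalCDF x ∧
  D * p * (1 - L) = Real.exp (μ + σ ^ 2 / 2) * stdNormalCDF (x - σ)
    + Real.exp (ν + τ ^ 2 / 2) * stdNormalCDF (x - τ)

open MeasureTheory Set Filter Topology ProbabilityTheory

lemma stdNormalPDF_eq_gaussianPDFReal : stdNormalPDF = gaussianPDFReal 0 1 := by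
  ext u; simp [stdNormalPDF, gaussianPDFReal]

lemma stdNormalPDF_pos (u : ℝ) : 0 < stdNormalPDF u := by
  unfold stdNormalPDF; positivity

lemma stdNormalPDF_le (u : ℝ) : stdNormalPDF u ≤ (√(2 * π))⁻¹ :=
  mul_le_of_le_one_right (by positivity) (exp_le_one_iff.2 (by nlinarith [sq_nonneg u]))

lemma continuous_stdNormalPDF : Continuous stdNormalPDF := by
  unfold stdNormalPDF; fun_prop

lemma integrable_stdNormalPDF : Integrable stdNormalPDF :=
  stdNormalPDF_eq_gaussianPDFReal ▸ integrable_gaussianPDFReal 0 1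

lemma integral_stdNormalPDF : ∫ u, stdNormalPDF u = 1 :=
  stdNormalPDF_eq_gaussianPDFReal ▸ integral_gaussianPDFReal_eq_one 0 one_ne_zero

lemma hasDerivAt_stdNormalCDF (x : ℝ) : HasDerivAt stdNormalCDF (stdNormalPDF x) x := by
  have h : stdNormalCDF = fun y => stdNormalCDF 0 + ∫ u in 0..y, stdNormalPDF u := by
    ext y
    rw [← intervalIntegral.integral_Iic_sub_Iic integrable_stdNormalPDF.integrableOn
      integrable_stdNormalPDF.integrableOn, stdNormalCDF, stdNormalCDF]
    ring
  rw [h]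
  exact (continuous_stdNormalPDF.integral_hasStrictDerivAt 0 x).hasDerivAt.const_add _

lemma continuous_stdNormalCDF : Continuous stdNormalCDF :=
  continuous_iff_continuousAt.2 fun x => (hasDerivAt_stdNormalCDF x).continuousAt

lemma stdNormalCDF_strictMono : StrictMono stdNormalCDF :=
  strictMono_of_deriv_pos fun x => (hasDerivAt_stdNormalCDF x).deriv ▸ stdNormalPDF_pos x

lemma tendsto_stdNormalCDF_atTop : Tendsto stdNormalCDF atTop (𝓝 1) :=
  integral_stdNormalPDF ▸
    (aecover_Iic tendsto_id).integral_tendsto_of_countably_generated integrable_stdNormalPDF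

lemma tendsto_stdNormalCDF_atBot : Tendsto stdNormalCDF atBot (𝓝 0) :=
  tendsto_integral_Iic_zero tendsto_id

lemma stdNormalCDF_pos (x : ℝ) : 0 < stdNormalCDF x :=
  (setIntegral_nonneg measurableSet_Iic fun u _ => (stdNormalPDF_pos u).le).trans_lt
    (stdNormalCDF_strictMono (sub_one_lt x))

lemma stdNormalCDF_stdNormalQuantile {p : ℝ} (hp0 : 0 < p) (hp1 : p < 1) :
    stdNormalCDF (stdNormalQuantile p) = p :=
  Function.invFun_eq <| mem_range_of_exists_le_of_exists_ge continuous_stdNormalCDF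
    (tendsto_stdNormalCDF_atBot.eventually (eventually_le_nhds hp0)).exists
    (tendsto_stdNormalCDF_atTop.eventually (eventually_ge_nhds hp1)).exists

noncomputable def lowerTailMGF (x τ : ℝ) : ℝ :=
  ∫ v in Iic x, stdNormalPDF v * exp (τ * (v - x))

lemma stdNormalPDF_mul_exp (x τ v : ℝ) :
    stdNormalPDF v * exp (τ * (v - x)) = exp (τ ^ 2 / 2 - τ * x) * stdNormalPDF (v - τ) := by
  unfold stdNormalPDF
  rw [mul_assoc, ← exp_add, mul_left_comm, ← exp_add]
  ring_nf

lemma integrable_stdNormalPDF_mul_exp (x τ : ℝ) :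
    Integrable fun v => stdNormalPDF v * exp (τ * (v - x)) := by
  simp_rw [stdNormalPDF_mul_exp]
  exact (integrable_stdNormalPDF.comp_sub_right τ).const_mul _

lemma lowerTailMGF_eq (x τ : ℝ) :
    lowerTailMGF x τ = exp (τ ^ 2 / 2 - τ * x) * stdNormalCDF (x - τ) := by
  have hshift : ∫ v in Iic x, stdNormalPDF (v - τ) = stdNormalCDF (x - τ) := by
    rw [show Iic x = (· - τ) ⁻¹' Iic (x - τ) by simp,
      (measurePreserving_sub_right volume τ).setIntegral_preimage_emb
        (measurableEmbedding_subRight τ), stdNormalCDF]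
  simp_rw [lowerTailMGF, stdNormalPDF_mul_exp, integral_const_mul, hshift]

lemma lowerTailMGF_zero (x : ℝ) : lowerTailMGF x 0 = stdNormalCDF x := by
  simp [lowerTailMGF, stdNormalCDF]

lemma lowerTailMGF_pos (x τ : ℝ) : 0 < lowerTailMGF x τ := by
  rw [lowerTailMGF_eq]
  exact mul_pos (exp_pos _) (stdNormalCDF_pos _)

lemma continuous_lowerTailMGF (x : ℝ) : Continuous (lowerTailMGF x) := by
  simp_rw [funext (lowerTailMGF_eq x)]
  exact (continuous_exp.comp (by fun_prop)).mul (continuous_stdNormalCDF.comp (by fun_prop))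

lemma lowerTailMGF_strictAnti (x : ℝ) : StrictAnti (lowerTailMGF x) := by
  intro τ₁ τ₂ hτ
  set g := fun v => stdNormalPDF v * exp (τ₁ * (v - x)) - stdNormalPDF v * exp (τ₂ * (v - x))
  have hg : ∀ v < x, 0 < g v := fun v hv =>
    sub_pos.2 (mul_lt_mul_of_pos_left (exp_lt_exp.2 (by nlinarith)) (stdNormalPDF_pos v))
  have hgi : Integrable g :=
    (integrable_stdNormalPDF_mul_exp x τ₁).sub (integrable_stdNormalPDF_mul_exp x τ₂)
  rw [← sub_pos, lowerTailMGF, lowerTailMGF, ← integral_sub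
    (integrable_stdNormalPDF_mul_exp x τ₁).integrableOn
    (integrable_stdNormalPDF_mul_exp x τ₂).integrableOn]
  refine (setIntegral_pos_iff_support_of_nonneg_ae ?_ hgi.integrableOn).2 ?_
  · filter_upwards [ae_restrict_mem measurableSet_Iic] with v hv
    rcases (mem_Iic.1 hv).lt_or_eq with hv | rfl
    exacts [(hg v hv).le, by simp [g]]
  · exact (by simp : 0 < volume (Iio x)).trans_le
      (measure_mono fun v hv => ⟨(hg v hv).ne', Iio_subset_Iic_self hv⟩)

lemma lowerTailMGF_le (x : ℝ) {τ : ℝ} (hτ : 0 < τ) :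
    lowerTailMGF x τ ≤ (√(2 * π))⁻¹ / τ := by
  have hexp : ∀ v, exp (τ * (v - x)) = exp (τ * v) * exp (-(τ * x)) := fun v => by
    rw [← exp_add]; ring_nf
  have hint : IntegrableOn (fun v => exp (τ * (v - x))) (Iic x) := by
    simp_rw [hexp]; exact (integrableOn_exp_mul_Iic hτ x).mul_const _
  calc lowerTailMGF x τ ≤ ∫ v in Iic x, (√(2 * π))⁻¹ * exp (τ * (v - x)) :=
        setIntegral_mono_on (integrable_stdNormalPDF_mul_exp x τ).integrableOn (hint.const_mul _)
          measurableSet_Iic fun v _ => mul_le_mul_of_nonneg_right (stdNormalPDF_le v) (exp_pos _).le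
    _ = (√(2 * π))⁻¹ / τ := by
      simp_rw [hexp, integral_const_mul, integral_mul_const, integral_exp_mul_Iic hτ,
        div_mul_eq_mul_div, ← exp_add, add_neg_cancel, exp_zero, mul_one_div]

lemma tendsto_lowerTailMGF_atTop (x : ℝ) : Tendsto (lowerTailMGF x) atTop (𝓝 0) :=
  tendsto_of_tendsto_of_tendsto_of_le_of_le' tendsto_const_nhds
    (tendsto_const_nhds.div_atTop tendsto_id)
    (Eventually.of_forall fun τ => (lowerTailMGF_pos x τ).le)
    ((eventually_gt_atTop 0).mono fun _ hτ => lowerTailMGF_le x hτ)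

lemma exists_pos_lowerTailMGF_eq_iff (x c : ℝ) :
    (∃ τ, 0 < τ ∧ lowerTailMGF x τ = c) ↔ 0 < c ∧ c < stdNormalCDF x := by
  constructor
  · rintro ⟨τ, hτ, rfl⟩
    exact ⟨lowerTailMGF_pos x τ, lowerTailMGF_zero x ▸ lowerTailMGF_strictAnti x hτ⟩
  · rintro ⟨hc0, hc⟩
    obtain ⟨τ, rfl⟩ : c ∈ range (lowerTailMGF x) :=
      mem_range_of_exists_le_of_exists_ge (continuous_lowerTailMGF x)
        ((tendsto_lowerTailMGF_atTop x).eventually (eventually_le_nhds hc0)).exists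
        ⟨0, (lowerTailMGF_zero x).symm ▸ hc.le⟩
    exact ⟨τ, (lowerTailMGF_strictAnti x).lt_iff_gt.1 (lowerTailMGF_zero x ▸ hc), rfl⟩

lemma exp_add_mul_stdNormalCDF_sub (ν τ x : ℝ) :
    exp (ν + τ ^ 2 / 2) * stdNormalCDF (x - τ) = exp (ν + τ * x) * lowerTailMGF x τ := by
  rw [lowerTailMGF_eq, ← mul_assoc, ← exp_add]
  ring_nf

lemma eq_of_exp_add_mul_stdNormalCDF_sub_eq {x ν τ ν' τ' : ℝ}
    (hlevel : exp (ν + τ * x) = exp (ν' + τ' * x))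
    (htail : exp (ν + τ ^ 2 / 2) * stdNormalCDF (x - τ) =
      exp (ν' + τ' ^ 2 / 2) * stdNormalCDF (x - τ')) :
    ν = ν' ∧ τ = τ' := by
  rw [exp_add_mul_stdNormalCDF_sub, exp_add_mul_stdNormalCDF_sub, hlevel] at htail
  have hτ : τ = τ' :=
    (lowerTailMGF_strictAnti x).injective (mul_left_cancel₀ (exp_pos _).ne' htail)
  subst hτ
  exact ⟨by linarith [exp_injective hlevel], rfl⟩

lemma exists_exp_add_mul_stdNormalCDF_sub_eq_iff (x R K : ℝ) :
    (∃ ν τ, 0 < τ ∧ exp (ν + τ * x) = R ∧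
        exp (ν + τ ^ 2 / 2) * stdNormalCDF (x - τ) = K) ↔
      0 < R ∧ 0 < K ∧ K < R * stdNormalCDF x := by
  constructor
  · rintro ⟨ν, τ, hτ, rfl, rfl⟩
    rw [exp_add_mul_stdNormalCDF_sub]
    have hh := (exists_pos_lowerTailMGF_eq_iff x _).1 ⟨τ, hτ, rfl⟩
    exact ⟨exp_pos _, mul_pos (exp_pos _) hh.1, mul_lt_mul_of_pos_left hh.2 (exp_pos _)⟩
  · rintro ⟨hR, hK, hKR⟩
    obtain ⟨τ, hτ, hτK⟩ := (exists_pos_lowerTailMGF_eq_iff x (K / R)).2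
      ⟨div_pos hK hR, (div_lt_iff₀' hR).2 hKR⟩
    refine ⟨log R - τ * x, τ, hτ, by rw [sub_add_cancel, exp_log hR], ?_⟩
    rw [exp_add_mul_stdNormalCDF_sub, sub_add_cancel, exp_log hR, hτK, mul_div_cancel₀ _ hR.ne']

lemma stdNormalCDF_lt_stdNormalCDF_log_iff {D μ σ : ℝ} (hD : 0 < D) (hσ : 0 < σ) (x : ℝ) :
    stdNormalCDF x < stdNormalCDF ((log D - μ) / σ) ↔ exp (μ + σ * x) < D := by
  rw [stdNormalCDF_strictMono.lt_iff_lt, lt_div_iff₀ hσ, ← lt_log_iff_exp_lt hD]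
  constructor <;> intro h <;> linarith

theorem calibration_solution_iff_general (D p L μ σ : ℝ) (hD : 0 < D) (hp0 : 0 < p) (hp1 : p < 1)
    (hσ : 0 < σ) :
    ((∃ ν τ x : ℝ, SolvesCalibration D p L μ σ ν τ x) ↔
      (p < stdNormalCDF ((Real.log D - μ) / σ) ∧
        (p * Real.exp (μ + σ * stdNormalQuantile p)
            - Real.exp (μ + σ ^ 2 / 2) * stdNormalCDF (stdNormalQuantile p - σ)) / (p * D) < L ∧
        L < 1 - Real.exp (μ + σ ^ 2 / 2) * stdNormalCDF (stdNormalQuantile p - σ) / (p * D))) ∧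
    (∀ ν τ x ν' τ' x' : ℝ, SolvesCalibration D p L μ σ ν τ x →
        SolvesCalibration D p L μ σ ν' τ' x' → ν = ν' ∧ τ = τ') := by
  refine ⟨?_, ?_⟩
  · have hΦq := stdNormalCDF_stdNormalQuantile hp0 hp1
    set x₀ := stdNormalQuantile p
    set E := exp (μ + σ * x₀)
    set A := exp (μ + σ ^ 2 / 2) * stdNormalCDF (x₀ - σ)
    have hpD : 0 < p * D := mul_pos hp0 hD
    have hcond_i : p < stdNormalCDF ((log D - μ) / σ) ↔ E < D := by
      rw [← stdNormalCDF_lt_stdNormalCDF_log_iff hD hσ, hΦq]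
    calc (∃ ν τ x, SolvesCalibration D p L μ σ ν τ x)
        ↔ ∃ ν τ, 0 < τ ∧ exp (ν + τ * x₀) = D - E ∧
            exp (ν + τ ^ 2 / 2) * stdNormalCDF (x₀ - τ) = D * p * (1 - L) - A := by
          constructor
          · rintro ⟨ν, τ, x, hτ, hDx, hpx, hLx⟩
            obtain rfl : x = x₀ := stdNormalCDF_strictMono.injective (hpx.symm.trans hΦq.symm)
            exact ⟨ν, τ, hτ, by linarith, by linarith⟩
          · rintro ⟨ν, τ, hτ, hR, hK⟩
            exact ⟨ν, τ, x₀, hτ, by linarith, hΦq.symm, by linarith⟩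
      _ ↔ 0 < D - E ∧ 0 < D * p * (1 - L) - A ∧ D * p * (1 - L) - A < (D - E) * p := by
          rw [exists_exp_add_mul_stdNormalCDF_sub_eq_iff, hΦq]
      _ ↔ _ := by
          rw [hcond_i, div_lt_iff₀ hpD, lt_sub_comm (a := L), div_lt_iff₀ hpD]
          constructor <;> rintro ⟨h₁, h₂, h₃⟩ <;>
            exact ⟨by linarith, by linarith, by linarith⟩
  · rintro ν τ x ν' τ' x' ⟨-, hD₁, hp₁, hL₁⟩ ⟨-, hD₂, hp₂, hL₂⟩
    obtain rfl : x = x' := stdNormalCDF_strictMono.injective (hp₁.symm.trans hp₂)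
    exact eq_of_exp_add_mul_stdNormalCDF_sub_eq (by linarith) (by linarith)

/-- Existence and uniqueness of a solution `(ν, τ) ∈ ℝ × (0, ∞)` of the comonotonic
two-assets calibration system: a solution exists iff `p < Φ((log D - μ)/σ)` and the
LGD `L` lies strictly between the stated bounds; if a solution exists, it is unique. -/
theorem calibration_solution_iff (D p L μ σ : ℝ) (hD : 0 < D) (hp0 : 0 < p) (hp1 : p < 1)
    (hL0 : 0 < L) (hL1 : L < 1) (hσ : 0 < σ) :
    ((∃ ν τ x : ℝ, SolvesCalibration D p L μ σ ν τ x) ↔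
      (p < stdNormalCDF ((Real.log D - μ) / σ) ∧
        (p * Real.exp (μ + σ * stdNormalQuantile p)
            - Real.exp (μ + σ ^ 2 / 2) * stdNormalCDF (stdNormalQuantile p - σ)) / (p * D) < L ∧
        L < 1 - Real.exp (μ + σ ^ 2 / 2) * stdNormalCDF (stdNormalQuantile p - σ) / (p * D))) ∧
    (∀ ν τ x ν' τ' x' : ℝ, SolvesCalibration D p L μ σ ν τ x →
        SolvesCalibration D p L μ σ ν' τ' x' → ν = ν' ∧ τ = τ') :=
  calibration_solution_iff_general D p L μ σ hD hp0 hp1 hσ
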